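/- arXiv:2209.14617 — 2 statements merged into one kernel-verified Lean document; each statement's English description precedes it below -/
import Mathlib

section
/- Let (V,∇) be an H_W-supermodule and X an odd element of Ch^W_{Π^{N+1}V}(2) fixed by the S_2-action (X^σ = X for σ ∈ S_2). Then the Λ-bracket [a_Λ b]_X := (−1)^{p(a)(N̄+1̄)} X_{Λ,−Λ−∇}(a⊗b) satisfies the skew-symmetry [b_Λ a]_X = −(−1)^{p(a)p(b)+N̄} [a_{−Λ−∇} b]_X. Conversely, if [·_Λ·]_X satisfies skew-symmetry then X^σ = X for all σ ∈ S_2. -/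
namespace SUSYW

open Finset

noncomputable section

/-- Model of `V[Λ]` for a `(1|N)_W`-supervariable `Λ = (λ,θ^1,…,θ^N)`:
finitely supported families indexed by the monomials `Λ^{m|I} = λ^m θ^I`. -/
abbrev L1 (N : ℕ) (V : Type) [AddCommGroup V] : Type :=
  (ℕ × Finset (Fin N)) →₀ V

/-- Model of `V[Λ₁,Λ₂]`, indexed by monomials `Λ₁^{m₁|I₁} Λ₂^{m₂|I₂}`. -/
abbrev L2 (N : ℕ) (V : Type) [AddCommGroup V] : Type :=
  ((ℕ × ℕ) × (Finset (Fin N) × Finset (Fin N))) →₀ V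

variable {K : Type} [Field K] {N : ℕ}
variable {V M : Type} [AddCommGroup V] [AddCommGroup M]

/-- `Res_Λ(λ^{-1} ·) : V[Λ] → V`, the coefficient of `Λ^{0|[N]}`. -/
def res1 (x : L1 N V) : V := x (0, Finset.univ)

/-- apply a map to all coefficients -/
def mapC (f : V → M) (x : L1 N V) : L1 N M :=
  x.sum fun mi v => Finsupp.single mi (f v)

/-- multiplication by `λ` on `V[Λ]` -/
def mulLam (x : L1 N V) : L1 N V :=
  x.sum fun mi v => Finsupp.single (mi.1 + 1, mi.2) v

/-- the sign `σ({i}, I)` arising when `θ^i` is moved into the monomial `θ^I` -/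
def thSign {N : ℕ} (I : Finset (Fin N)) (i : Fin N) : ℤ :=
  (-1) ^ (I.filter (fun j => j < i)).card

/-- multiplication by `θ^i` on `V[Λ]` (W-case: `θ^i θ^j + θ^j θ^i = 0`) -/
def mulTheta (i : Fin N) (x : L1 N V) : L1 N V :=
  x.sum fun mi v =>
    if i ∈ mi.2 then 0 else thSign mi.2 i • Finsupp.single (mi.1, insert i mi.2) v

/-- `∂_λ` on `V[Λ]` -/
def dLam (K : Type) [Field K] [Module K V] (x : L1 N V) : L1 N V :=
  x.sum fun mi v => (mi.1 : K) • Finsupp.single (mi.1 - 1, mi.2) v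

/-- `S^i` acting on the coefficients of `V[Λ]` through the odd variables:
`S^i (Λ^{m|I} v) = (−1)^{#I} Λ^{m|I} (S^i v)` -/
def opS (S : Fin N → V → V) (i : Fin N) (x : L1 N V) : L1 N V :=
  x.sum fun mi v => ((-1 : ℤ) ^ mi.2.card) • Finsupp.single mi (S i v)

/-- multiplication by `(−λ−T)` -/
def negLamT (T : V → V) (x : L1 N V) : L1 N V := -(mulLam x) - mapC T x

/-- multiplication by `(−θ^i−S^i)` -/
def negThS (S : Fin N → V → V) (i : Fin N) (x : L1 N V) : L1 N V :=
  -(mulTheta i x) - opS S i x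

/-- the substitution `Λ ↦ −Λ−∇`: replaces `Λ^{m|I} v` by `(−λ−T)^m (−θ−S)^I v` -/
def substNeg (T : V → V) (S : Fin N → V → V) (x : L1 N V) : L1 N V :=
  x.sum fun mi v =>
    (negLamT T)^[mi.1]
      ((mi.2.sort (· ≤ ·)).foldr (fun i y => negThS S i y) (Finsupp.single (0, ∅) v))

/-- evaluation at `Λ = −∇` (`λ ↦ −T`, `θ^i ↦ −S^i`): `a_{−∇} x` -/
def evNeg (T : V → V) (S : Fin N → V → V) (x : L1 N V) : V :=
  x.sum fun mi v =>
    ((-1 : ℤ) ^ (mi.1 + mi.2.card)) •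
      T^[mi.1] ((mi.2.sort (· ≤ ·)).foldr (fun i w => S i w) v)

/-- multiplication by `λ₁` on `V[Λ₁,Λ₂]` -/
def mulLam1 (x : L2 N V) : L2 N V :=
  x.sum fun q v => Finsupp.single ((q.1.1 + 1, q.1.2), q.2) v

/-- multiplication by `λ₂` on `V[Λ₁,Λ₂]` -/
def mulLam2 (x : L2 N V) : L2 N V :=
  x.sum fun q v => Finsupp.single ((q.1.1, q.1.2 + 1), q.2) v

/-- multiplication by `θ₁^i` on `V[Λ₁,Λ₂]` -/
def mulTh1 (i : Fin N) (x : L2 N V) : L2 N V :=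
  x.sum fun q v =>
    if i ∈ q.2.1 then 0 else
      thSign q.2.1 i • Finsupp.single (q.1, (insert i q.2.1, q.2.2)) v

/-- multiplication by `θ₂^i` on `V[Λ₁,Λ₂]` (crossing the `θ₁`-block) -/
def mulTh2 (i : Fin N) (x : L2 N V) : L2 N V :=
  x.sum fun q v =>
    if i ∈ q.2.2 then 0 else
      (((-1 : ℤ) ^ q.2.1.card) * thSign q.2.2 i) •
        Finsupp.single (q.1, (q.2.1, insert i q.2.2)) v

/-- `V[Λ] → V[Λ₁,Λ₂]`, putting the variable in the first slot -/
def emb1 (y : L1 N V) : L2 N V :=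
  y.sum fun mi v => Finsupp.single ((mi.1, 0), (mi.2, ∅)) v

/-- `V[Λ] → V[Λ₁,Λ₂]`, putting the variable in the second slot -/
def emb2 (y : L1 N V) : L2 N V :=
  y.sum fun mi v => Finsupp.single ((0, mi.1), (∅, mi.2)) v

/-- left multiplication by the monomial `Λ₁^{m₁|I₁} Λ₂^{m₂|I₂}` on `V[Λ₁,Λ₂]` -/
def monoMul (m1 m2 : ℕ) (I1 I2 : Finset (Fin N)) (z : L2 N V) : L2 N V :=
  mulLam1^[m1] (mulLam2^[m2]
    ((I1.sort (· ≤ ·)).foldr (fun i y => mulTh1 i y)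
      ((I2.sort (· ≤ ·)).foldr (fun i y => mulTh2 i y) z)))

/-- the substitution `Λ ↦ Λ₁ + Λ₂ : V[Λ] → V[Λ₁,Λ₂]` -/
def substAdd (x : L1 N V) : L2 N V :=
  x.sum fun mi v =>
    (fun y => mulLam1 y + mulLam2 y)^[mi.1]
      ((mi.2.sort (· ≤ ·)).foldr (fun i y => mulTh1 i y + mulTh2 i y)
        (Finsupp.single ((0, 0), (∅, ∅)) v))

/-- the substitution `Λ ↦ Λ₁ − Λ₂ : V[Λ] → V[Λ₁,Λ₂]` -/
def substDiff (x : L1 N V) : L2 N V :=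
  x.sum fun mi v =>
    (fun y => mulLam1 y - mulLam2 y)^[mi.1]
      ((mi.2.sort (· ≤ ·)).foldr (fun i y => mulTh1 i y - mulTh2 i y)
        (Finsupp.single ((0, 0), (∅, ∅)) v))

/-- the Koszul exchange of the two supervariables `Λ₁ ↔ Λ₂` -/
def swapL2 (z : L2 N V) : L2 N V :=
  z.sum fun q v =>
    ((-1 : ℤ) ^ (q.2.1.card * q.2.2.card)) •
      Finsupp.single ((q.1.2, q.1.1), (q.2.2, q.2.1)) v

/-- apply an operation `f` of parity `pN` (as an operator in the variable `Λ₁`)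
to the coefficients of `y`, whose monomials live in the variable `Λ₂`. -/
def appO1 (pN : ℕ) (y : L1 N V) (f : V → L1 N M) : L2 N M :=
  y.sum fun mi w => ((-1 : ℤ) ^ (mi.2.card * pN)) • monoMul 0 mi.1 ∅ mi.2 (emb1 (f w))

/-- apply an operation `f` of parity `pN` (in the variable `Λ₂`) to the coefficients
of `y`, whose monomials live in the variable `Λ₁`. -/
def appO2 (pN : ℕ) (y : L1 N V) (f : V → L1 N M) : L2 N M :=
  y.sum fun mi w => ((-1 : ℤ) ^ (mi.2.card * pN)) • monoMul mi.1 0 mi.2 ∅ (emb2 (f w))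

/-- apply an operation `f` of parity `pN` (in the variable `Λ₁+Λ₂`) to the coefficients
of `y`, whose monomials live in the variable `Λ₁`. -/
def appSum (pN : ℕ) (y : L1 N V) (f : V → L1 N M) : L2 N M :=
  y.sum fun mi w => ((-1 : ℤ) ^ (mi.2.card * pN)) • monoMul mi.1 0 mi.2 ∅ (substAdd (f w))

/-- apply an operation `f` of parity `pN` (in the variable `Λ₂`) to the coefficients
of a two-variable polynomial `z`. -/
def appO2L2 (pN : ℕ) (z : L2 N V) (f : V → L1 N M) : L2 N M :=
  z.sum fun q w =>
    ((-1 : ℤ) ^ ((q.2.1.card + q.2.2.card) * pN)) •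
      monoMul q.1.1 q.1.2 q.2.1 q.2.2 (emb2 (f w))

/-- apply an operation `f` of parity `pN` (in the variable `Λ₁+Λ₂`) to the coefficients
of a two-variable polynomial `z`. -/
def appSumL2 (pN : ℕ) (z : L2 N V) (f : V → L1 N M) : L2 N M :=
  z.sum fun q w =>
    ((-1 : ℤ) ^ ((q.2.1.card + q.2.2.card) * pN)) •
      monoMul q.1.1 q.1.2 q.2.1 q.2.2 (substAdd (f w))

/-- the definite integral `∫_0^{λ₁} dΛ₂ : V[Λ₁,Λ₂] → V[Λ₁]` -/
def intGamma (K : Type) [Field K] [Module K V] (z : L2 N V) : L1 N V :=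
  z.sum fun q v =>
    if q.2.2 = Finset.univ then
      ((-1 : ℤ) ^ (q.2.1.card * N)) •
        (((q.1.2 + 1 : ℕ) : K)⁻¹ • Finsupp.single (q.1.1 + q.1.2 + 1, q.2.1) v)
    else 0

/-- the definite integral `∫_{−T}^0 dΛ : V[Λ] → V` -/
def intT0 [Module K V] (T : V →ₗ[K] V) (x : L1 N V) : V :=
  x.sum fun mi v =>
    if mi.2 = Finset.univ then
      (-(((mi.1 + 1 : ℕ) : K)⁻¹)) • (((-1 : ℤ) ^ (mi.1 + 1)) • (T ^ (mi.1 + 1)) v)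
    else 0

/-- the operator `(∫_0^T dΛ a) ·` applied to elements of `M[Λ]` via an action `mu` -/
def intOpA [Module K V] [Module K M] (T : V →ₗ[K] V) (mu : V → M → M) (a : V) (x : L1 N M) : M :=
  x.sum fun mi v =>
    if mi.2 = Finset.univ then
      (((mi.1 + 1 : ℕ) : K)⁻¹) • mu ((T ^ (mi.1 + 1)) a) v
    else 0

/-- the operator `(e^{∇·∂_Λ} a) ·` on `V[Λ]`:
`(e^{∇·∂_Λ}a)(Λ^{m|I} v) = (−1)^{p(a)#I} (e^{∇·∂_Λ}Λ^{m|I} a) v` -/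
def expOp (T : V → V) (S : Fin N → V → V) (mu : V → V → V) (paN : ℕ) (a : V)
    (x : L1 N V) : L1 N V :=
  x.sum fun mi v =>
    ((-1 : ℤ) ^ (paN * mi.2.card)) •
      (((fun y => mulLam y + mapC T y)^[mi.1]
          ((mi.2.sort (· ≤ ·)).foldr (fun i y => mulTheta i y + opS S i y)
            (Finsupp.single (0, ∅) a))).sum
        fun mj w => Finsupp.single mj (mu w v))

variable [Module K V] [Module K M]

/-- bilinearity of a two-argument map -/
def Bilin (K : Type) [Field K] {A B C : Type} [AddCommGroup A] [Module K A]
    [AddCommGroup B] [Module K B] [AddCommGroup C] [Module K C] (f : A → B → C) : Prop :=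
  (∀ a a' b, f (a + a') b = f a b + f a' b) ∧
  (∀ (r : K) a b, f (r • a) b = r • f a b) ∧
  (∀ a b b', f a (b + b') = f a b + f a b') ∧
  (∀ (r : K) a b, f a (r • b) = r • f a b)

/-- the relations of the free commutative superalgebra `H_W`:
`TS^i = S^iT`, `S^iS^j + S^jS^i = 0` -/
def HWrel (T : V →ₗ[K] V) (S : Fin N → V →ₗ[K] V) : Prop :=
  (∀ i, T ∘ₗ S i = S i ∘ₗ T) ∧ (∀ i j, S i ∘ₗ S j + S j ∘ₗ S i = 0)

/-- `T` is even and the `S^i` are odd for the grading `gr` -/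
def NablaGraded (gr : ZMod 2 → Submodule K V) (T : V →ₗ[K] V)
    (S : Fin N → V →ₗ[K] V) : Prop :=
  (∀ (i : ZMod 2) a, a ∈ gr i → T a ∈ gr i) ∧
  (∀ (j : Fin N) (i : ZMod 2) a, a ∈ gr i → S j a ∈ gr (i + 1))

/-- the `Λ`-bracket has parity `N̄`: the coefficient of `Λ^{m|I}` in `[a_Λ b]` has
parity `p(a)+p(b)+N̄+#I` -/
def BraParity (gr : ZMod 2 → Submodule K V) (gr' : ZMod 2 → Submodule K M)
    (bra : V → V → L1 N M) : Prop :=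
  ∀ (pa pb : ZMod 2) a b, a ∈ gr pa → b ∈ gr pb → ∀ mi : ℕ × Finset (Fin N),
    bra a b mi ∈ gr' (pa + pb + (N : ZMod 2) + (mi.2.card : ZMod 2))

/-- sesquilinearity of the `Λ`-bracket (N_W-case) -/
def Sesqui (gr : ZMod 2 → Submodule K V) (T : V →ₗ[K] V) (S : Fin N → V →ₗ[K] V)
    (bra : V → V → L1 N V) : Prop :=
  (∀ a b, bra (T a) b = -(mulLam (bra a b))) ∧
  (∀ a b, bra a (T b) = mulLam (bra a b) + mapC T (bra a b)) ∧
  (∀ (i : Fin N) a b, bra (S i a) b = -(((-1 : ℤ) ^ N) • mulTheta i (bra a b))) ∧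
  (∀ (i : Fin N) (pa : ZMod 2) a b, a ∈ gr pa →
    bra a (S i b) =
      ((-1 : ℤ) ^ (pa.val + N)) • (mulTheta i (bra a b) + opS (fun j => S j) i (bra a b)))

/-- skew-symmetry `[b_Λ a] = −(−1)^{p(a)p(b)+N̄} [a_{−Λ−∇} b]` -/
def Skew (gr : ZMod 2 → Submodule K V) (T : V →ₗ[K] V) (S : Fin N → V →ₗ[K] V)
    (bra : V → V → L1 N V) : Prop :=
  ∀ (pa pb : ZMod 2) a b, a ∈ gr pa → b ∈ gr pb →
    bra b a = -(((-1 : ℤ) ^ (pa.val * pb.val + N)) •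
      substNeg (fun v => T v) (fun j v => S j v) (bra a b))

/-- the Jacobi identity
`[a_{Λ₁}[b_{Λ₂}c]] = (−1)^{(p(a)+N̄)N̄}[[a_{Λ₁}b]_{Λ₁+Λ₂}c]
  + (−1)^{(p(a)+N̄)(p(b)+N̄)}[b_{Λ₂}[a_{Λ₁}c]]` -/
def Jacobi (gr : ZMod 2 → Submodule K V) (bra : V → V → L1 N V) : Prop :=
  ∀ (pa pb : ZMod 2) a b c, a ∈ gr pa → b ∈ gr pb →
    appO1 (pa.val + N) (bra b c) (fun w => bra a w) =
      ((-1 : ℤ) ^ ((pa.val + N) * N)) • appSum N (bra a b) (fun v => bra v c)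
      + ((-1 : ℤ) ^ ((pa.val + N) * (pb.val + N))) •
          appO2 (pb.val + N) (bra a c) (fun w => bra b w)

/-- the product has even parity -/
def MuParity (gr : ZMod 2 → Submodule K V) (mu : V → V → V) : Prop :=
  ∀ (pa pb : ZMod 2) a b, a ∈ gr pa → b ∈ gr pb → mu a b ∈ gr (pa + pb)

/-- `T` and the `S^i` are derivations of the product -/
def DerRule (gr : ZMod 2 → Submodule K V) (T : V →ₗ[K] V) (S : Fin N → V →ₗ[K] V)
    (mu : V → V → V) : Prop :=
  (∀ a b, T (mu a b) = mu (T a) b + mu a (T b)) ∧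
  (∀ (i : Fin N) (pa : ZMod 2) a b, a ∈ gr pa →
    S i (mu a b) = mu (S i a) b + ((-1 : ℤ) ^ pa.val) • mu a (S i b))

/-- quasi-commutativity `ab − (−1)^{p(a)p(b)} ba = ∫_{−T}^0 dΛ [a_Λ b]` -/
def QuasiComm (gr : ZMod 2 → Submodule K V) (T : V →ₗ[K] V)
    (bra : V → V → L1 N V) (mu : V → V → V) : Prop :=
  ∀ (pa pb : ZMod 2) a b, a ∈ gr pa → b ∈ gr pb →
    mu a b - ((-1 : ℤ) ^ (pa.val * pb.val)) • mu b a = intT0 T (bra a b)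

/-- quasi-associativity
`(ab)c − a(bc) = (∫_0^T dΛ a)[b_Λ c] + (−1)^{p(a)p(b)}(∫_0^T dΛ b)[a_Λ c]` -/
def QuasiAssoc (gr : ZMod 2 → Submodule K V) (T : V →ₗ[K] V)
    (bra : V → V → L1 N V) (mu : V → V → V) : Prop :=
  ∀ (pa pb : ZMod 2) a b c, a ∈ gr pa → b ∈ gr pb →
    mu (mu a b) c - mu a (mu b c) =
      intOpA T mu a (bra b c) + ((-1 : ℤ) ^ (pa.val * pb.val)) • intOpA T mu b (bra a c)

/-- the Wick formula
`[a_Λ bc] = [a_Λ b]c + (−1)^{(p(a)+N̄)p(b)} b[a_Λ c] + ∫_0^λ dΓ [[a_Λ b]_Γ c]` -/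
def Wick (gr : ZMod 2 → Submodule K V) (bra : V → V → L1 N V) (mu : V → V → V) : Prop :=
  ∀ (pa pb : ZMod 2) a b c, a ∈ gr pa → b ∈ gr pb →
    bra a (mu b c) =
      ((bra a b).sum fun mi v => Finsupp.single mi (mu v c))
      + ((-1 : ℤ) ^ ((pa.val + N) * pb.val)) •
          ((bra a c).sum fun mi w =>
            ((-1 : ℤ) ^ (pb.val * mi.2.card)) • Finsupp.single mi (mu b w))
      + intGamma K (appO2 N (bra a b) (fun v => bra v c))

/-- the three conditions characterizing the indefinite integral `∫^Λ dΓ [·_Γ ·]`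
of the `Λ`-bracket with respect to the product `mu` -/
def IsIntBra (S : Fin N → V →ₗ[K] V) (bra : V → V → L1 N V) (mu : V → V → V)
    (F : V → V → L1 N V) : Prop :=
  (∀ (i : Fin N) a b,
    res1 (F (S i a) b) = ((-1 : ℤ) ^ (N + 1)) • res1 (mulTheta i (F a b))) ∧
  (∀ a b, dLam K (F a b) = bra a b) ∧
  (∀ a b, res1 (F a b) = mu a b)


variable [Module K V]

section AuxSkew

private lemma zsum_aux {α P : Type} {W : Type} [AddCommGroup W] [AddCommGroup P]
    (c : ℤ) (x : α →₀ W) (g : α → W → P)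
    (hs : ∀ (c : ℤ) (a : α) (v : W), g a (c • v) = c • g a v) :
    (c • x).sum g = c • x.sum g := by
  have h0 : ∀ a, g a 0 = 0 := by
    intro a
    simpa using hs 0 a 0
  rw [Finsupp.sum_smul_index' h0, Finsupp.smul_sum]
  exact Finsupp.sum_congr fun a _ => hs c a (x a)

variable {N : ℕ} {W : Type} [AddCommGroup W] {T' : W → W} {S' : Fin N → W → W}

private lemma mulLam_zsmul (c : ℤ) (x : L1 N W) : mulLam (c • x) = c • mulLam x :=
  zsum_aux c x _ (fun c mi v => by simp [Finsupp.smul_single])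

private lemma mapC_zsmul (hT : ∀ (c : ℤ) v, T' (c • v) = c • T' v) (c : ℤ) (x : L1 N W) :
    mapC T' (c • x) = c • mapC T' x :=
  zsum_aux c x _ (fun c mi v => by simp [hT, Finsupp.smul_single])

private lemma mulTheta_zsmul (i : Fin N) (c : ℤ) (x : L1 N W) :
    mulTheta i (c • x) = c • mulTheta i x :=
  zsum_aux c x _ (fun c mi v => by
    by_cases h : i ∈ mi.2 <;>
      simp [h, ← Finsupp.smul_single, smul_comm c])

private lemma opS_zsmul (hS : ∀ i (c : ℤ) v, S' i (c • v) = c • S' i v)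
    (i : Fin N) (c : ℤ) (x : L1 N W) :
    opS S' i (c • x) = c • opS S' i x :=
  zsum_aux c x _ (fun c mi v => by
    simp [hS, ← Finsupp.smul_single, smul_comm c])

private lemma negLamT_zsmul (hT : ∀ (c : ℤ) v, T' (c • v) = c • T' v) (c : ℤ) (x : L1 N W) :
    negLamT T' (c • x) = c • negLamT T' x := by
  simp [negLamT, mulLam_zsmul, mapC_zsmul hT, smul_sub, smul_neg]

private lemma negThS_zsmul (hS : ∀ i (c : ℤ) v, S' i (c • v) = c • S' i v)
    (i : Fin N) (c : ℤ) (x : L1 N W) :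
    negThS S' i (c • x) = c • negThS S' i x := by
  simp [negThS, mulTheta_zsmul, opS_zsmul hS, smul_sub, smul_neg]

private lemma foldr_zsmul (hS : ∀ i (c : ℤ) v, S' i (c • v) = c • S' i v)
    (l : List (Fin N)) (c : ℤ) (y : L1 N W) :
    l.foldr (fun i z => negThS S' i z) (c • y) =
      c • l.foldr (fun i z => negThS S' i z) y := by
  induction l with
  | nil => rfl
  | cons i l ih => simp only [List.foldr_cons, ih, negThS_zsmul hS]

private lemma iter_zsmul (hT : ∀ (c : ℤ) v, T' (c • v) = c • T' v)
    (m : ℕ) (c : ℤ) (y : L1 N W) :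
    (negLamT T')^[m] (c • y) = c • (negLamT T')^[m] y := by
  induction m generalizing y with
  | zero => rfl
  | succ m ih =>
    rw [Function.iterate_succ_apply, Function.iterate_succ_apply,
      negLamT_zsmul hT, ih]

private lemma substNeg_zsmul (hT : ∀ (c : ℤ) v, T' (c • v) = c • T' v)
    (hS : ∀ i (c : ℤ) v, S' i (c • v) = c • S' i v) (c : ℤ) (x : L1 N W) :
    substNeg T' S' (c • x) = c • substNeg T' S' x := by
  refine zsum_aux c x _ ?_
  intro c mi v
  rw [← Finsupp.smul_single, foldr_zsmul hS, iter_zsmul hT]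

private lemma sign_eq {m n : ℕ} (h : (m : ZMod 2) = (n : ZMod 2) + 1) :
    ((-1 : ℤ)) ^ m = -((-1 : ℤ)) ^ n := by
  have h2 : m % 2 = (n + 1) % 2 := by
    have := (ZMod.natCast_eq_natCast_iff' m (n + 1) 2).mp (by push_cast; rw [h])
    simpa using this
  rcases Nat.even_or_odd n with he | ho
  · have hm : Odd m := Nat.odd_iff.mpr (by have := Nat.even_iff.mp he; omega)
    rw [Odd.neg_one_pow hm, Even.neg_one_pow he]
  · have hm : Even m := Nat.even_iff.mpr (by have := Nat.odd_iff.mp ho; omega)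
    rw [Even.neg_one_pow hm, Odd.neg_one_pow ho, neg_neg]

end AuxSkew

/-- For an odd `X ∈ Ch^W_{Π^{N+1}V}(2)`, invariance under the
`S₂`-action (`X^σ = X`, i.e. `X a b = (−1)^{p̃(a)p̃(b)} X_{−Λ−∇,Λ}(b⊗a)` in reduced
coordinates) holds if and only if the associated `Λ`-bracket
`[a_Λ b]_X := (−1)^{p(a)(N̄+1̄)} X_{Λ,−Λ−∇}(a⊗b)` satisfies the skew-symmetry
`[b_Λ a]_X = −(−1)^{p(a)p(b)+N̄}[a_{−Λ−∇} b]_X`. -/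
theorem X_symmetric_iff_bracket_skew
    (K : Type) [Field K] [CharZero K] {N : ℕ} (hN : 0 < N)
    {V : Type} [AddCommGroup V] [Module K V]
    (gr : ZMod 2 → Submodule K V)
    (T : V →ₗ[K] V) (S : Fin N → V →ₗ[K] V)
    (hrel : HWrel T S) (hgr : NablaGraded gr T S)
    (X : V → V → L1 N V) (hX_bil : Bilin K X)
    (hXpar : ∀ (pa pb : ZMod 2) a b, a ∈ gr pa → b ∈ gr pb →
      ∀ mi : ℕ × Finset (Fin N),
        X a b mi ∈ gr (pa + pb + (N : ZMod 2) + (mi.2.card : ZMod 2))) :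
    -- `X^σ = X` for all `σ ∈ S₂` …
    (∀ (pa pb : ZMod 2) a b, a ∈ gr pa → b ∈ gr pb →
      X a b = ((-1 : ℤ) ^ ((pa.val + N + 1) * (pb.val + N + 1))) •
        substNeg (fun v => T v) (fun j v => S j v) (X b a))
    ↔
    -- … iff `[·_Λ·]_X` is skew-symmetric
    (∀ (pa pb : ZMod 2) a b, a ∈ gr pa → b ∈ gr pb →
      ((-1 : ℤ) ^ (pb.val * (N + 1))) • X b a =
        -(((-1 : ℤ) ^ (pa.val * pb.val + N)) •
          substNeg (fun v => T v) (fun j v => S j v)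
            (((-1 : ℤ) ^ (pa.val * (N + 1))) • X a b))) := by
  have hT : ∀ (c : ℤ) (v : V), T (c • v) = c • T v := fun c v => map_zsmul T c v
  have hS : ∀ (i : Fin N) (c : ℤ) (v : V), S i (c • v) = c • S i v :=
    fun i c v => map_zsmul (S i) c v
  constructor
  · intro h pa pb a b ha hb
    rw [h pb pa b a hb ha, substNeg_zsmul hT hS, smul_smul, smul_smul, ← neg_smul]
    congr 1
    · rw [← pow_add, ← pow_add]
      apply sign_eq
      push_cast
      generalize (pa.val : ZMod 2) = u
      generalize (pb.val : ZMod 2) = v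
      generalize (N : ZMod 2) = x
      revert x v u
      decide
  · intro h pa pb a b ha hb
    have h2 : X a b = ((-1 : ℤ) ^ (pa.val * (N + 1))) •
        (-(((-1 : ℤ) ^ (pb.val * pa.val + N)) •
          substNeg (fun v => T v) (fun j v => S j v)
            (((-1 : ℤ) ^ (pb.val * (N + 1))) • X b a))) := by
      rw [← h pb pa b a hb ha, smul_smul, ← pow_add,
        Even.neg_one_pow ⟨_, rfl⟩, one_smul]
    rw [h2, substNeg_zsmul hT hS, smul_smul, smul_neg, smul_smul, ← neg_smul]
    congr 1
    rw [← pow_add, ← pow_add]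
    refine (sign_eq ?_).symm
    push_cast
    generalize (pa.val : ZMod 2) = u
    generalize (pb.val : ZMod 2) = v
    generalize (N : ZMod 2) = x
    revert x v u
    decide


end
end SUSYW
end

section
/- Let K[z_k, ζ_k^1,…,ζ_k^N : k ∈ [n]] be the N_W = N polynomial superalgebra in n supervariables and O_n^★ its localization at z_{k,l} = z_k − z_l (1 ≤ k < l ≤ n). Let δ^0 := Σ_k ∂_{z_k} and δ^i := Σ_k ∂_{ζ_k^i} for i ∈ [N]. Then the translation-invariant subalgebra Ker(δ^0) ∩ Ker(δ^1) ∩ ⋯ ∩ Ker(δ^N) ⊂ O_n^★ equals the subalgebra O_n^{★T} generated by {z_{k,l}^{±1} : 1 ≤ k < l ≤ n} ∪ {ζ_{k,l}^i := ζ_k^i − ζ_l^i : i ∈ [N], 1 ≤ k < l ≤ n}. -/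
open scoped TensorProduct

namespace SUSYW19

noncomputable section

variable (K : Type) [Field K] [CharZero K] (n N : ℕ)

/-- the multiplicative set generated by the differences `z_k − z_l` -/
def zDiffMonoid : Submonoid (MvPolynomial (Fin n) K) :=
  Submonoid.closure
    {p | ∃ k l : Fin n, k ≠ l ∧ p = MvPolynomial.X k - MvPolynomial.X l}

variable (O : Type) [CommRing O] [Algebra (MvPolynomial (Fin n) K) O]
  [IsLocalization (zDiffMonoid K n) O] [Algebra K O]
  [IsScalarTower K (MvPolynomial (Fin n) K) O]

/-- the model of `O_n^★`: the localization of `K[z_k]` at the `z_{k,l}`, tensored with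
the exterior algebra on the odd variables `ζ_k^i` -/
abbrev OStar : Type := O ⊗[K] ExteriorAlgebra K (Fin n × Fin N → K)

/-- the even variable `z_k` -/
def zVar (k : Fin n) : OStar K n N O :=
  (algebraMap (MvPolynomial (Fin n) K) O (MvPolynomial.X k)) ⊗ₜ[K] 1

/-- the difference `z_{k,l} = z_k − z_l` -/
def zDiff (k l : Fin n) : OStar K n N O :=
  (algebraMap (MvPolynomial (Fin n) K) O
    (MvPolynomial.X k - MvPolynomial.X l)) ⊗ₜ[K] 1

/-- the inverse `z_{k,l}^{-1}` -/
def zDiffInv (k l : Fin n) (h : k ≠ l) : OStar K n N O :=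
  (IsLocalization.mk' O (1 : MvPolynomial (Fin n) K)
    (⟨MvPolynomial.X k - MvPolynomial.X l,
      Submonoid.subset_closure ⟨k, l, h, rfl⟩⟩ : zDiffMonoid K n)) ⊗ₜ[K] 1

/-- the odd variable `ζ_k^i` -/
def zetaVar (k : Fin n) (i : Fin N) : OStar K n N O :=
  1 ⊗ₜ[K] ExteriorAlgebra.ι K (Pi.single (k, i) (1 : K))

/-!
Fix an index `k₀`. The algebra `O_n^★` is generated by `z_{k₀}` over the subalgebra `S`
generated by the `z_{k,l}^{±1}`, the `ζ_{k,l}^i` and the `ζ_{k₀}^i`. Since `z_{k₀}` is central,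
every element is a polynomial in `z_{k₀}` with coefficients in `S`, on which `δ⁰` acts as
`d/dz_{k₀}` (it kills `S` and `δ⁰ z_{k₀} = 1`); in characteristic zero a `δ⁰`-invariant
polynomial is therefore constant, i.e. lies in `S`.

Each odd `δ^i` has the slice `ζ_{k₀}^i`: as `ζ² = 0` and `x ζ = ζ J(x)`, the map
`x ↦ x - ζ_{k₀}^i δ^i(x)` is an algebra endomorphism; it kills `ζ_{k₀}^i`, fixes the other
generators of `S` and every `δ^i`-invariant element. Removing the `ζ_{k₀}^i` one at a time
therefore moves an element of `Ker δ⁰ ∩ ⋯ ∩ Ker δ^N` into `O_n^{★T}`. Conversely, the kernel of a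
`J`-twisted derivation is a subalgebra, and it contains the translation-invariant generators.
-/

section TwistedDerivation

open Polynomial

variable {R A : Type*} [CommRing R] [Ring A] [Algebra R A]

def IsTwistedDerivation (σ : A →ₐ[R] A) (D : A →ₗ[R] A) : Prop :=
  ∀ x y, D (x * y) = D x * y + σ x * D y

theorem exists_eval₂_eq_of_mem_adjoin_insert {S : Subalgebra R A} {z : A}
    (hzS : ∀ a ∈ S, Commute a z) {x : A} (hx : x ∈ Algebra.adjoin R (insert z (S : Set A))) :
    ∃ p : S[X], p.eval₂ (S.val : S →+* A) z = x := by
  induction hx using Algebra.adjoin_induction with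
  | mem y hy =>
    rcases hy with rfl | hy
    · exact ⟨X, eval₂_X _ _⟩
    · exact ⟨C ⟨y, hy⟩, eval₂_C _ _⟩
  | algebraMap c => exact ⟨C (algebraMap R S c), eval₂_C _ _⟩
  | add y y' _ _ hy hy' =>
    obtain ⟨⟨p, rfl⟩, ⟨q, rfl⟩⟩ := And.intro hy hy'
    exact ⟨p + q, eval₂_add _ _⟩
  | mul y y' _ _ hy hy' =>
    obtain ⟨⟨p, rfl⟩, ⟨q, rfl⟩⟩ := And.intro hy hy'
    exact ⟨p * q, eval₂_mul_noncomm _ _ fun k => hzS _ (q.coeff k).2⟩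

namespace IsTwistedDerivation

variable {σ : A →ₐ[R] A} {D : A →ₗ[R] A}

theorem map_one_eq_zero (hD : IsTwistedDerivation σ D) : D 1 = 0 := by
  simpa using hD 1 1

theorem map_algebraMap (hD : IsTwistedDerivation σ D) (c : R) : D (algebraMap R A c) = 0 := by
  rw [Algebra.algebraMap_eq_smul_one, map_smul, hD.map_one_eq_zero, smul_zero]

theorem map_eq_zero_of_mem_adjoin (hD : IsTwistedDerivation σ D) {s : Set A}
    (hs : ∀ x ∈ s, D x = 0) {x : A} (hx : x ∈ Algebra.adjoin R s) : D x = 0 := by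
  induction hx using Algebra.adjoin_induction with
  | mem x hx => exact hs x hx
  | algebraMap c => exact hD.map_algebraMap c
  | add x y _ _ hx hy => rw [map_add, hx, hy, add_zero]
  | mul x y _ _ hx hy => rw [hD, hx, hy, zero_mul, mul_zero, add_zero]

theorem map_eq_zero_of_mul_eq_one (hD : IsTwistedDerivation σ D) {u v : A} (hu : D u = 0)
    (hvu : v * u = 1) (huv : u * v = 1) : D v = 0 := by
  have hDvu : D v * u = 0 := by simpa [hu, hvu, hD.map_one_eq_zero] using (hD v u).symm
  calc D v = D v * u * v := by rw [mul_assoc, huv, mul_one]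
    _ = 0 := by rw [hDvu, zero_mul]

theorem map_pow_of_map_eq_one (hD : IsTwistedDerivation (AlgHom.id R A) D) {z : A}
    (hz : D z = 1) (m : ℕ) : D (z ^ (m + 1)) = (m + 1 : ℕ) * z ^ m := by
  induction m with
  | zero => simp [hz]
  | succ m ih =>
    rw [pow_succ, hD, ih, hz, AlgHom.id_apply, mul_one, mul_assoc, ← pow_succ,
      Nat.cast_succ (m + 1), add_mul, one_mul]

theorem map_eval₂_eq (hD : IsTwistedDerivation (AlgHom.id R A) D) {S : Subalgebra R A} {z : A}
    (hz : D z = 1) (hS : ∀ a ∈ S, D a = 0) (p : S[X]) :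
    D (p.eval₂ (S.val : S →+* A) z) = (derivative p).eval₂ (S.val : S →+* A) z := by
  induction p using Polynomial.induction_on' with
  | add p q hp hq => rw [derivative_add, eval₂_add, eval₂_add, map_add, hp, hq]
  | monomial n a =>
    rw [derivative_monomial, eval₂_monomial, eval₂_monomial, AlgHom.coe_toRingHom,
      Subalgebra.coe_val]
    cases n with
    | zero => simp [hS a a.2]
    | succ m =>
      rw [hD, hS a a.2, zero_mul, zero_add, AlgHom.id_apply, hD.map_pow_of_map_eq_one hz]
      simp [mul_assoc]

theorem natDegree_eq_zero_of_map_eval₂_eq_zero (hD : IsTwistedDerivation (AlgHom.id R A) D)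
    [IsAddTorsionFree A] {S : Subalgebra R A} {z : A} (hz : D z = 1) (hS : ∀ a ∈ S, D a = 0)
    {p : S[X]} (hp : D (p.eval₂ (S.val : S →+* A) z) = 0) : p.natDegree = 0 := by
  by_contra hdeg
  have hiter : D^[p.natDegree] (p.eval₂ (S.val : S →+* A) z) = 0 := by
    obtain ⟨m, hm⟩ := Nat.exists_eq_succ_of_ne_zero hdeg
    rw [hm, Function.iterate_succ_apply, hp]
    exact Function.iterate_fixed (map_zero D) m
  have hconst : derivative^[p.natDegree] p = C (p.natDegree.factorial • p.leadingCoeff) := by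
    rw [eq_C_of_natDegree_le_zero ((natDegree_iterate_derivative p _).trans (Nat.sub_self _).le),
      coeff_iterate_derivative, zero_add, Nat.descFactorial_self, leadingCoeff]
  have hsemiconj : Function.Semiconj (eval₂ (S.val : S →+* A) z) derivative D :=
    fun q => (hD.map_eval₂_eq hz hS q).symm
  rw [← hsemiconj.iterate_right _ p, hconst, eval₂_C, AlgHom.coe_toRingHom, Subalgebra.coe_val,
    AddSubmonoidClass.coe_nsmul, smul_eq_zero, ZeroMemClass.coe_eq_zero,
    leadingCoeff_eq_zero] at hiter
  exact hdeg (hiter.elim (absurd · (Nat.factorial_ne_zero _)) fun hp0 => by simp [hp0])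

theorem mem_of_map_eq_zero_of_centralSlice (hD : IsTwistedDerivation (AlgHom.id R A) D)
    [IsAddTorsionFree A] {S : Subalgebra R A} {z : A} (hzS : ∀ a ∈ S, Commute a z)
    (hz : D z = 1) (hS : ∀ a ∈ S, D a = 0) {x : A}
    (hx : x ∈ Algebra.adjoin R (insert z (S : Set A))) (hDx : D x = 0) : x ∈ S := by
  obtain ⟨p, rfl⟩ := exists_eval₂_eq_of_mem_adjoin_insert hzS hx
  rw [eq_C_of_natDegree_eq_zero (hD.natDegree_eq_zero_of_map_eval₂_eq_zero hz hS hDx), eval₂_C]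
  exact SetLike.coe_mem _

theorem sub_mul_map_mul (hD : IsTwistedDerivation σ D) {ε : A} (hε : ε * ε = 0)
    (hσε : ∀ x, x * ε = ε * σ x) (x y : A) :
    x * y - ε * D (x * y) = (x - ε * D x) * (y - ε * D y) := by
  have hcross : x * (ε * D y) = ε * (σ x * D y) := by rw [← mul_assoc, hσε, mul_assoc]
  have hsq : ε * D x * (ε * D y) = 0 := by
    rw [mul_assoc, ← mul_assoc (D x), hσε, ← mul_assoc, ← mul_assoc, hε, zero_mul, zero_mul]
  rw [hD, sub_mul, mul_sub, mul_sub, hcross, hsq, mul_add, mul_assoc]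
  abel

theorem mem_adjoin_of_map_eq_zero_of_oddSlice (hD : IsTwistedDerivation σ D) {ε : A}
    (hε : ε * ε = 0) (hσε : ∀ x, x * ε = ε * σ x) (hDε : D ε = 1) {s : Set A}
    (hs : ∀ a ∈ s, D a = 0) {x : A} (hx : x ∈ Algebra.adjoin R (insert ε s)) (hDx : D x = 0) :
    x ∈ Algebra.adjoin R s := by
  let ρ : A →ₐ[R] A := AlgHom.ofLinearMap (LinearMap.id - LinearMap.mulLeft R ε ∘ₗ D)
    (by simp [hD.map_one_eq_zero]) fun x y => by simpa using hD.sub_mul_map_mul hε hσε x y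
  have hρ (y : A) : ρ y = y - ε * D y := rfl
  have hρx : ρ x ∈ Algebra.adjoin R (ρ '' insert ε s) := by
    rw [← AlgHom.map_adjoin]; exact Subalgebra.mem_map.mpr ⟨x, hx, rfl⟩
  rw [hρ, hDx, mul_zero, sub_zero] at hρx
  refine Algebra.adjoin_le ?_ hρx
  rintro _ ⟨y, rfl | hy, rfl⟩
  · rw [hρ, hDε, mul_one, sub_self]; exact zero_mem _
  · rw [hρ, hs y hy, mul_zero, sub_zero]; exact Algebra.subset_adjoin hy

end IsTwistedDerivation

theorem mem_adjoin_of_map_eq_zero_of_oddSlices {ι : Type*} [DecidableEq ι] {σ : A →ₐ[R] A}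
    {D : ι → A →ₗ[R] A} (hD : ∀ i, IsTwistedDerivation σ (D i)) {ε : ι → A}
    (hε : ∀ i, ε i * ε i = 0) (hσε : ∀ i x, x * ε i = ε i * σ x)
    (hDε : ∀ i j, D i (ε j) = if j = i then 1 else 0) {s : Set A}
    (hs : ∀ i, ∀ a ∈ s, D i a = 0) (t : Finset ι) {x : A}
    (hx : x ∈ Algebra.adjoin R (s ∪ ε '' t)) (hDx : ∀ i ∈ t, D i x = 0) :
    x ∈ Algebra.adjoin R s := by
  induction t using Finset.induction_on generalizing x with
  | empty => simpa using hx
  | insert i t hi ih =>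
    refine ih ?_ fun j hj => hDx j (Finset.mem_insert_of_mem hj)
    refine (hD i).mem_adjoin_of_map_eq_zero_of_oddSlice (hε i) (hσε i) (by simp [hDε]) ?_ ?_
      (hDx i (Finset.mem_insert_self i t))
    · rintro a (ha | ⟨j, hj, rfl⟩)
      · exact hs i a ha
      · rw [hDε, if_neg (ne_of_mem_of_not_mem hj hi)]
    · rwa [Finset.coe_insert, Set.image_insert_eq, Set.union_insert] at hx

end TwistedDerivation

section Generation

theorem IsLocalization.adjoin_image_union_mk'_one_eq_top {R P L : Type*} [CommRing R]
    [CommRing P] [Algebra R P] [CommRing L] [Algebra P L] [Algebra R L] [IsScalarTower R P L]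
    {M : Submonoid P} [IsLocalization M L] {g : Set P} (hg : Submonoid.closure g = M)
    {s : Set P} (hs : Algebra.adjoin R s = ⊤) :
    Algebra.adjoin R
      (algebraMap P L '' s ∪ {y | ∃ m : M, (m : P) ∈ g ∧ y = IsLocalization.mk' L 1 m}) = ⊤ := by
  subst hg
  set U := algebraMap P L '' s ∪
    {y | ∃ m : Submonoid.closure g, (m : P) ∈ g ∧ y = IsLocalization.mk' L 1 m}
  have hP (p : P) : algebraMap P L p ∈ Algebra.adjoin R U := by
    refine Algebra.adjoin_mono Set.subset_union_left ?_
    rw [← IsScalarTower.coe_toAlgHom' R P L, Algebra.adjoin_image, hs]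
    exact Subalgebra.mem_map.mpr ⟨p, Algebra.mem_top, rfl⟩
  have hinv (m : Submonoid.closure g) : IsLocalization.mk' L (1 : P) m ∈ Algebra.adjoin R U := by
    obtain ⟨m, hm⟩ := m
    induction hm using Submonoid.closure_induction with
    | mem p hp => exact Algebra.subset_adjoin (Or.inr ⟨_, hp, rfl⟩)
    | one =>
      rw [show (⟨1, _⟩ : Submonoid.closure g) = 1 from rfl, IsLocalization.mk'_one, map_one]
      exact one_mem _
    | mul p q hp hq ihp ihq =>
      rw [← one_mul (1 : P), ← Submonoid.mk_mul_mk _ _ _ hp hq, IsLocalization.mk'_mul]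
      exact mul_mem ihp ihq
  refine eq_top_iff.mpr fun y _ => ?_
  obtain ⟨⟨p, m⟩, rfl⟩ := IsLocalization.mk'_surjective (Submonoid.closure g) y
  dsimp only
  rw [IsLocalization.mk'_eq_mul_mk'_one]
  exact mul_mem (hP p) (hinv m)

theorem ExteriorAlgebra.adjoin_range_ι_comp_basis_eq_top {R M ι : Type*} [CommRing R]
    [AddCommGroup M] [Module R M] (b : Module.Basis ι R M) :
    Algebra.adjoin R (Set.range (ExteriorAlgebra.ι R ∘ b)) = ⊤ := by
  refine eq_top_iff.mpr ((CliffordAlgebra.adjoin_range_ι (Q := (0 : QuadraticForm R M))).ge.trans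
    (Algebra.adjoin_le ?_))
  rintro _ ⟨v, rfl⟩
  have hv : ExteriorAlgebra.ι R v ∈ Submodule.span R (Set.range (ExteriorAlgebra.ι R ∘ b)) := by
    rw [Set.range_comp, Submodule.span_image, b.span_eq]
    exact Submodule.mem_map_of_mem Submodule.mem_top
  exact Algebra.span_le_adjoin R _ hv

open Algebra.TensorProduct in
theorem TensorProduct.adjoin_image_includeLeft_union_eq_top {R A B : Type*} [CommRing R]
    [Ring A] [Algebra R A] [Ring B] [Algebra R B] {s : Set A} {t : Set B}
    (hs : Algebra.adjoin R s = ⊤) (ht : Algebra.adjoin R t = ⊤) :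
    Algebra.adjoin R ((includeLeft : A →ₐ[R] A ⊗[R] B) '' s ∪ includeRight '' t) = ⊤ := by
  refine eq_top_iff.mpr ((adjoin_tmul_eq_top R A B).ge.trans (Algebra.adjoin_le ?_))
  rintro _ ⟨a, b, rfl⟩
  rw [← mul_one a, ← one_mul b, ← tmul_mul_tmul]
  refine mul_mem (Algebra.adjoin_mono Set.subset_union_left ?_)
    (Algebra.adjoin_mono Set.subset_union_right ?_)
  · rw [Algebra.adjoin_image, hs]; exact Subalgebra.mem_map.mpr ⟨a, Algebra.mem_top, rfl⟩
  · rw [Algebra.adjoin_image, ht]; exact Subalgebra.mem_map.mpr ⟨b, Algebra.mem_top, rfl⟩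

theorem TensorProduct.commute_tmul_one {R A B : Type*} [CommRing R] [CommRing A] [Algebra R A]
    [Ring B] [Algebra R B] (a : A) (x : A ⊗[R] B) : Commute (a ⊗ₜ[R] (1 : B)) x := by
  induction x using TensorProduct.induction_on with
  | zero => exact Commute.zero_right _
  | tmul a' b => exact (Commute.all a a').tmul (Commute.one_left b)
  | add x y hx hy => exact hx.add_right hy

end Generation

section OStar

variable {K : Type} [Field K] {n N : ℕ} {O : Type} [CommRing O] [Algebra K O]

theorem zetaVar_mul_zetaVar (k l : Fin n) (i j : Fin N) :
    zetaVar K n N O k i * zetaVar K n N O l j = -(zetaVar K n N O l j * zetaVar K n N O k i) := by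
  simp only [zetaVar, Algebra.TensorProduct.tmul_mul_tmul, one_mul, ← TensorProduct.tmul_neg]
  rw [eq_neg_of_add_eq_zero_left (ExteriorAlgebra.ι_add_mul_swap _ _)]

theorem zetaVar_mul_self (k : Fin n) (i : Fin N) :
    zetaVar K n N O k i * zetaVar K n N O k i = 0 := by
  simp [zetaVar, Algebra.TensorProduct.tmul_mul_tmul]

variable [Algebra (MvPolynomial (Fin n) K) O]

theorem zDiff_eq_sub (k l : Fin n) :
    zDiff K n N O k l = zVar K n N O k - zVar K n N O l := by
  rw [zDiff, zVar, zVar, map_sub, TensorProduct.sub_tmul]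

theorem zDiff_swap (k l : Fin n) : zDiff K n N O k l = -zDiff K n N O l k := by
  rw [zDiff_eq_sub, zDiff_eq_sub, neg_sub]

variable [IsLocalization (zDiffMonoid K n) O]

theorem zDiffInv_mul_zDiff (k l : Fin n) (h : k ≠ l) :
    zDiffInv K n N O k l h * zDiff K n N O k l = 1 := by
  rw [zDiffInv, zDiff, Algebra.TensorProduct.tmul_mul_tmul, IsLocalization.mk'_spec, map_one,
    one_mul, Algebra.TensorProduct.one_def]

theorem zDiff_mul_zDiffInv (k l : Fin n) (h : k ≠ l) :
    zDiff K n N O k l * zDiffInv K n N O k l h = 1 := by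
  rw [zDiff, (TensorProduct.commute_tmul_one _ _).eq, ← zDiff, zDiffInv_mul_zDiff]

theorem zDiffInv_swap (k l : Fin n) (h : k ≠ l) :
    zDiffInv K n N O k l h = -zDiffInv K n N O l k h.symm := by
  calc zDiffInv K n N O k l h
      = zDiffInv K n N O k l h * (zDiff K n N O l k * zDiffInv K n N O l k h.symm) := by
        rw [zDiff_mul_zDiffInv, mul_one]
    _ = -zDiffInv K n N O l k h.symm := by
        rw [zDiff_swap l k, neg_mul, mul_neg, ← mul_assoc, zDiffInv_mul_zDiff, one_mul]

variable (K n N O) in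
def translationGenerators : Set (OStar K n N O) :=
  {x | ∃ k l : Fin n, ∃ h : k < l,
    x = zDiff K n N O k l ∨ x = zDiffInv K n N O k l h.ne ∨
    ∃ i : Fin N, x = zetaVar K n N O k i - zetaVar K n N O l i}

theorem zDiff_mem_adjoin (k l : Fin n) :
    zDiff K n N O k l ∈ Algebra.adjoin K (translationGenerators K n N O) := by
  rcases lt_trichotomy k l with h | rfl | h
  · exact Algebra.subset_adjoin ⟨k, l, h, Or.inl rfl⟩
  · rw [zDiff_eq_sub, sub_self]; exact zero_mem _
  · rw [zDiff_swap]; exact neg_mem (Algebra.subset_adjoin ⟨l, k, h, Or.inl rfl⟩)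

theorem zDiffInv_mem_adjoin (k l : Fin n) (h : k ≠ l) :
    zDiffInv K n N O k l h ∈ Algebra.adjoin K (translationGenerators K n N O) := by
  rcases h.lt_or_gt with h | h
  · exact Algebra.subset_adjoin ⟨k, l, h, Or.inr (Or.inl rfl)⟩
  · rw [zDiffInv_swap]; exact neg_mem (Algebra.subset_adjoin ⟨l, k, h, Or.inr (Or.inl rfl)⟩)

theorem zetaVar_sub_mem_adjoin (k l : Fin n) (i : Fin N) :
    zetaVar K n N O k i - zetaVar K n N O l i ∈
      Algebra.adjoin K (translationGenerators K n N O) := by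
  rcases lt_trichotomy k l with h | rfl | h
  · exact Algebra.subset_adjoin ⟨k, l, h, Or.inr (Or.inr ⟨i, rfl⟩)⟩
  · rw [sub_self]; exact zero_mem _
  · rw [← neg_sub]; exact neg_mem (Algebra.subset_adjoin ⟨l, k, h, Or.inr (Or.inr ⟨i, rfl⟩)⟩)

theorem IsTwistedDerivation.map_eq_zero_of_mem_adjoin_translationGenerators
    {σ : OStar K n N O →ₐ[K] OStar K n N O} {D : OStar K n N O →ₗ[K] OStar K n N O}
    (hD : IsTwistedDerivation σ D) (hz : ∀ k l, D (zVar K n N O k) = D (zVar K n N O l))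
    (hζ : ∀ k l i, D (zetaVar K n N O k i) = D (zetaVar K n N O l i)) {x : OStar K n N O}
    (hx : x ∈ Algebra.adjoin K (translationGenerators K n N O)) : D x = 0 := by
  refine hD.map_eq_zero_of_mem_adjoin ?_ hx
  have hzDiff (k l : Fin n) : D (zDiff K n N O k l) = 0 := by
    rw [zDiff_eq_sub, map_sub, hz k l, sub_self]
  rintro _ ⟨k, l, hkl, rfl | rfl | ⟨i, rfl⟩⟩
  · exact hzDiff k l
  · exact hD.map_eq_zero_of_mul_eq_one (hzDiff k l) (zDiffInv_mul_zDiff k l _)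
      (zDiff_mul_zDiffInv k l _)
  · rw [map_sub, hζ k l i, sub_self]

variable (K n N O) in
def generators : Set (OStar K n N O) :=
  Set.range (zVar K n N O) ∪ {x | ∃ k l, ∃ h : k ≠ l, x = zDiffInv K n N O k l h} ∪
    Set.range fun p : Fin n × Fin N => zetaVar K n N O p.1 p.2

variable [IsScalarTower K (MvPolynomial (Fin n) K) O]

variable (K n N O) in
theorem adjoin_generators : Algebra.adjoin K (generators K n N O) = ⊤ := by
  refine top_le_iff.mp ((TensorProduct.adjoin_image_includeLeft_union_eq_top
    (IsLocalization.adjoin_image_union_mk'_one_eq_top (R := K) (M := zDiffMonoid K n) rfl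
      (MvPolynomial.adjoin_range_X))
    (ExteriorAlgebra.adjoin_range_ι_comp_basis_eq_top (Pi.basisFun K _))).ge.trans
    (Algebra.adjoin_mono ?_))
  rintro _ (⟨_, (⟨_, ⟨k, rfl⟩, rfl⟩ | ⟨⟨_, _⟩, ⟨k, l, hkl, rfl⟩, rfl⟩), rfl⟩ | ⟨_, ⟨p, rfl⟩, rfl⟩)
  · exact Or.inl (Or.inl ⟨k, rfl⟩)
  · exact Or.inl (Or.inr ⟨k, l, hkl, rfl⟩)
  · exact Or.inr ⟨p, by simp [zetaVar]⟩

theorem mul_zetaVar (J : OStar K n N O →ₐ[K] OStar K n N O)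
    (hJO : ∀ o : O, J (o ⊗ₜ[K] 1) = o ⊗ₜ[K] 1)
    (hJz : ∀ k i, J (zetaVar K n N O k i) = -zetaVar K n N O k i)
    (k : Fin n) (i : Fin N) (x : OStar K n N O) :
    x * zetaVar K n N O k i = zetaVar K n N O k i * J x := by
  have hx : x ∈ Algebra.adjoin K (generators K n N O) := by
    rw [adjoin_generators]; exact Algebra.mem_top
  induction hx using Algebra.adjoin_induction with
  | mem g hg =>
    rcases hg with (⟨k', rfl⟩ | ⟨k', l', h', rfl⟩) | ⟨⟨k', i'⟩, rfl⟩
    · rw [zVar, hJO]; exact (TensorProduct.commute_tmul_one _ _).eq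
    · rw [zDiffInv, hJO]; exact (TensorProduct.commute_tmul_one _ _).eq
    · rw [hJz, mul_neg, zetaVar_mul_zetaVar]
  | algebraMap c => rw [AlgHom.commutes, Algebra.commutes]
  | add x y _ _ hx hy => rw [add_mul, map_add, mul_add, hx, hy]
  | mul x y _ _ hx hy => rw [map_mul, mul_assoc, hy, ← mul_assoc, hx, mul_assoc]

variable (K n N O) in
theorem adjoin_insert_zVar_eq_top (k₀ : Fin n) :
    Algebra.adjoin K (insert (zVar K n N O k₀)
      (Algebra.adjoin K (translationGenerators K n N O ∪ Set.range (zetaVar K n N O k₀)) :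
        Set (OStar K n N O))) = ⊤ := by
  set S := Algebra.adjoin K (translationGenerators K n N O ∪ Set.range (zetaVar K n N O k₀))
  have hT {x} (hx : x ∈ Algebra.adjoin K (translationGenerators K n N O)) :
      x ∈ Algebra.adjoin K (insert (zVar K n N O k₀) S) :=
    Algebra.subset_adjoin (Set.mem_insert_of_mem _ (Algebra.adjoin_mono Set.subset_union_left hx))
  rw [eq_top_iff, ← adjoin_generators, Algebra.adjoin_le_iff]
  rintro _ ((⟨k, rfl⟩ | ⟨k, l, hkl, rfl⟩) | ⟨⟨k, i⟩, rfl⟩)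
  · rw [← sub_add_cancel (zVar K n N O k) (zVar K n N O k₀), ← zDiff_eq_sub]
    exact add_mem (hT (zDiff_mem_adjoin k k₀)) (Algebra.subset_adjoin (Set.mem_insert _ _))
  · exact hT (zDiffInv_mem_adjoin k l hkl)
  · dsimp only
    rw [← sub_add_cancel (zetaVar K n N O k i) (zetaVar K n N O k₀ i)]
    refine add_mem (hT (zetaVar_sub_mem_adjoin k k₀ i)) (Algebra.subset_adjoin ?_)
    exact Set.mem_insert_of_mem _ (Algebra.subset_adjoin (Or.inr ⟨i, rfl⟩))

end OStar

/-- The translation-invariant subalgebra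
`Ker(δ⁰) ∩ Ker(δ¹) ∩ ⋯ ∩ Ker(δ^N) ⊆ O_n^★`, where `δ⁰ = Σ_k ∂_{z_k}` and
`δ^i = Σ_k ∂_{ζ_k^i}`, equals the subalgebra `O_n^{★T}` generated by the
`z_{k,l}^{±1}` and the `ζ_{k,l}^i = ζ_k^i − ζ_l^i` for `1 ≤ k < l ≤ n`. -/
theorem translation_invariants_eq_OStarT
    (J : OStar K n N O →ₐ[K] OStar K n N O)
    (hJO : ∀ o : O, J (o ⊗ₜ[K] 1) = o ⊗ₜ[K] 1)
    (hJz : ∀ k i, J (zetaVar K n N O k i) = -(zetaVar K n N O k i))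
    -- `δ⁰ = Σ_k ∂_{z_k}`, the even translation derivation:
    (d0 : OStar K n N O →ₗ[K] OStar K n N O)
    (hd0L : ∀ x y, d0 (x * y) = d0 x * y + x * d0 y)
    (hd0z : ∀ k, d0 (zVar K n N O k) = 1)
    (hd0zeta : ∀ k i, d0 (zetaVar K n N O k i) = 0)
    -- `δ^i = Σ_k ∂_{ζ_k^i}`, the odd translation superderivations:
    (d : Fin N → OStar K n N O →ₗ[K] OStar K n N O)
    (hdL : ∀ i x y, d i (x * y) = d i x * y + J x * d i y)
    (hdz : ∀ i k, d i (zVar K n N O k) = 0)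
    (hdzeta : ∀ i k j, d i (zetaVar K n N O k j) = if j = i then 1 else 0) :
    {x : OStar K n N O | d0 x = 0 ∧ ∀ i : Fin N, d i x = 0} =
      ↑(Algebra.adjoin K
        {x : OStar K n N O | ∃ k l : Fin n, ∃ h : k < l,
          x = zDiff K n N O k l ∨ x = zDiffInv K n N O k l h.ne ∨
          ∃ i : Fin N, x = zetaVar K n N O k i - zetaVar K n N O l i}) := by
  have hd0 : IsTwistedDerivation (AlgHom.id K _) d0 := hd0L
  have hd0T {x} (hx : x ∈ Algebra.adjoin K (translationGenerators K n N O)) : d0 x = 0 :=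
    hd0.map_eq_zero_of_mem_adjoin_translationGenerators (by simp [hd0z]) (by simp [hd0zeta]) hx
  have hdT (i) {x} (hx : x ∈ Algebra.adjoin K (translationGenerators K n N O)) : d i x = 0 :=
    IsTwistedDerivation.map_eq_zero_of_mem_adjoin_translationGenerators (hdL i)
      (by simp [hdz]) (by simp [hdzeta]) hx
  ext x
  refine ⟨fun ⟨hx0, hx⟩ => ?_, fun hx => ⟨hd0T hx, fun i => hdT i hx⟩⟩
  obtain hn | ⟨⟨k₀⟩⟩ := isEmpty_or_nonempty (Fin n)
  · refine Algebra.adjoin_mono ?_ (adjoin_generators K n N O ▸ Algebra.mem_top)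
    rintro _ ((⟨k, -⟩ | ⟨k, -⟩) | ⟨⟨k, -⟩, -⟩) <;> exact isEmptyElim k
  set S := Algebra.adjoin K (translationGenerators K n N O ∪ Set.range (zetaVar K n N O k₀))
  have hd0S (a : OStar K n N O) (ha : a ∈ S) : d0 a = 0 := by
    refine hd0.map_eq_zero_of_mem_adjoin ?_ ha
    rintro _ (hg | ⟨i, rfl⟩)
    exacts [hd0T (Algebra.subset_adjoin hg), hd0zeta k₀ i]
  have : IsAddTorsionFree (OStar K n N O) := .of_isTorsionFree K _
  have hxS : x ∈ S :=
    hd0.mem_of_map_eq_zero_of_centralSlice (fun a _ => (TensorProduct.commute_tmul_one _ a).symm)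
      (hd0z k₀) hd0S (adjoin_insert_zVar_eq_top K n N O k₀ ▸ Algebra.mem_top) hx0
  exact mem_adjoin_of_map_eq_zero_of_oddSlices hdL (zetaVar_mul_self k₀) (mul_zetaVar J hJO hJz k₀)
    (hdzeta · k₀) (fun i _ hg => hdT i (Algebra.subset_adjoin hg)) Finset.univ
    (by simpa using hxS) fun i _ => hx i

end
end SUSYW19
end
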